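/- arXiv:1611.01585 — 3 statements merged into one kernel-verified Lean document; each statement's English description precedes it below -/
import Mathlib

section
/- For every real r > 1 and all x, y with 0 ≤ x ≤ 1 and 0 ≤ y ≤ 1, it holds that x + r·y − x·r^y − y·r^(1−x) ≥ 0. -/
lemma rpow_le_linear (r t : ℝ) (hr : 1 < r) (ht0 : 0 ≤ t) (ht1 : t ≤ 1) :
    r ^ t ≤ 1 + (r - 1) * t := by
  have hrpos : 0 < r := lt_trans one_pos hr
  have h := convexOn_exp.2 (Set.mem_univ (0:ℝ)) (Set.mem_univ (Real.log r))
    (by linarith : (0:ℝ) ≤ 1 - t) ht0 (by ring)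
  rw [Real.rpow_def_of_pos hrpos]
  simp only [smul_eq_mul, mul_zero, zero_add, Real.exp_zero, Real.exp_log hrpos] at h
  calc Real.exp (Real.log r * t) ≤ (1 - t) * 1 + t * r := by rw [mul_comm]; exact h
    _ = 1 + (r - 1) * t := by ring

theorem stmt_0 (r x y : ℝ) (hr : 1 < r) (hx0 : 0 ≤ x) (hx1 : x ≤ 1)
    (hy0 : 0 ≤ y) (hy1 : y ≤ 1) :
    0 ≤ x + r * y - x * r ^ y - y * r ^ (1 - x) := by
  have h1 := rpow_le_linear r y hr hy0 hy1
  have h2 := rpow_le_linear r (1 - x) hr (by linarith) (by linarith)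
  nlinarith [mul_le_mul_of_nonneg_left h1 hx0, mul_le_mul_of_nonneg_left h2 hy0]
end

section
/- For every real r > 1, every positive integer σ, and all integers b, p with 1 ≤ b ≤ σ and 1 ≤ p ≤ σ, it holds that (b·r^(p/σ) + p·r^(1−b/σ)) / (b + r·p) ≤ 1. -/
lemma rpow_le_chord (r t : ℝ) (hr : 1 < r) (ht0 : 0 ≤ t) (ht1 : t ≤ 1) :
    r ^ t ≤ 1 + t * (r - 1) := by
  have hr0 : 0 < r := by linarith
  rw [Real.rpow_def_of_pos hr0]
  have h := convexOn_exp.2 (Set.mem_univ 0) (Set.mem_univ (Real.log r))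
    (by linarith : (0:ℝ) ≤ 1 - t) ht0 (by ring)
  simp only [smul_eq_mul, mul_zero, zero_add, Real.exp_zero, Real.exp_log hr0] at h
  calc Real.exp (Real.log r * t) = Real.exp (t * Real.log r) := by ring_nf
    _ ≤ (1 - t) * 1 + t * r := h
    _ = 1 + t * (r - 1) := by ring

theorem stmt_1 (r : ℝ) (hr : 1 < r) (σ b p : ℕ) (hσ : 1 ≤ σ)
    (hb1 : 1 ≤ b) (hbσ : b ≤ σ) (hp1 : 1 ≤ p) (hpσ : p ≤ σ) :
    ((b : ℝ) * r ^ ((p : ℝ) / σ) + (p : ℝ) * r ^ (1 - (b : ℝ) / σ)) /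
      ((b : ℝ) + r * p) ≤ 1 := by
  have hσ0 : (0:ℝ) < σ := by exact_mod_cast hσ
  have hb0 : (0:ℝ) < b := by exact_mod_cast hb1
  have hp0 : (0:ℝ) < p := by exact_mod_cast hp1
  have hbσ' : (b:ℝ) ≤ σ := by exact_mod_cast hbσ
  have hpσ' : (p:ℝ) ≤ σ := by exact_mod_cast hpσ
  have hy0 : (0:ℝ) ≤ (p:ℝ)/σ := by positivity
  have hy1 : (p:ℝ)/σ ≤ 1 := by rw [div_le_one hσ0]; exact hpσ'
  have hx0 : (0:ℝ) ≤ 1 - (b:ℝ)/σ := by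
    rw [sub_nonneg, div_le_one hσ0]; exact hbσ'
  have hx1 : 1 - (b:ℝ)/σ ≤ 1 := by
    have : 0 ≤ (b:ℝ)/σ := by positivity
    linarith
  have h1 := rpow_le_chord r ((p:ℝ)/σ) hr hy0 hy1
  have h2 := rpow_le_chord r (1 - (b:ℝ)/σ) hr hx0 hx1
  have hden : (0:ℝ) < (b:ℝ) + r * p := by nlinarith
  rw [div_le_one hden]
  have key : (b:ℝ) * (1 + (p:ℝ)/σ * (r-1)) + (p:ℝ) * (1 + (1 - (b:ℝ)/σ) * (r-1))
      = (b:ℝ) + r * p := by field_simp; ring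
  nlinarith [mul_le_mul_of_nonneg_left h1 hb0.le, mul_le_mul_of_nonneg_left h2 hp0.le]
end

section
/- Let r > 1, let m be a positive integer, let σ be a positive integer, and define π_k = (1 − r^(−(m−k)/σ)) / (1 − r^(−m/σ)) for integers 0 ≤ k ≤ m. Then for any 0 < k < m and any integers b, p with 1 ≤ b ≤ σ, 1 ≤ p ≤ σ, b ≤ k, p ≤ m − k, we have π_k ≤ π_{k+p} · b/(b + r·p) + π_{k−b} · (r·p)/(b + r·p). -/
/-!
With `A = r ^ (-(m - k) / σ)` we have `π_j = (1 - A r ^ ((j - k) / σ)) / (1 - r ^ (-m / σ))`, so the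
inequality says that the weighted mean of `r ^ (p / σ)` and `r ^ (-b / σ)` with weights
`b : r p` is at most `1`, i.e. `b r ^ (p / σ) + r p r ^ (-b / σ) ≤ b + r p`. Bernoulli's inequality
`x ^ a ≤ 1 + a (x - 1)` for `a ∈ [0, 1]`, at `x = r, a = p / σ` and at `x = r⁻¹, a = b / σ`, bounds
the left side by `b + r p` plus the error terms `± b p (r - 1) / σ`, which cancel.
-/

section

open Real

lemma rpow_le_one_add_mul_sub_one {x a : ℝ} (hx : 0 ≤ x) (ha₀ : 0 ≤ a) (ha₁ : a ≤ 1) :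
    x ^ a ≤ 1 + a * (x - 1) := by
  simpa using rpow_one_add_le_one_add_mul_self (s := x - 1) (by linarith) ha₀ ha₁

lemma mul_rpow_add_mul_rpow_neg_le {r σ b p : ℝ} (hr : 0 < r) (hσ : 0 < σ)
    (hb₀ : 0 ≤ b) (hbσ : b ≤ σ) (hp₀ : 0 ≤ p) (hpσ : p ≤ σ) :
    b * r ^ (p / σ) + r * p * r ^ (-(b / σ)) ≤ b + r * p := by
  have hwin : r ^ (p / σ) ≤ 1 + p / σ * (r - 1) :=
    rpow_le_one_add_mul_sub_one hr.le (by positivity) ((div_le_one hσ).2 hpσ)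
  have hlose : r ^ (-(b / σ)) ≤ 1 + b / σ * (r⁻¹ - 1) := by
    rw [rpow_neg hr.le, ← inv_rpow hr.le]
    exact rpow_le_one_add_mul_sub_one (by positivity) (by positivity) ((div_le_one hσ).2 hbσ)
  calc b * r ^ (p / σ) + r * p * r ^ (-(b / σ))
      ≤ b * (1 + p / σ * (r - 1)) + r * p * (1 + b / σ * (r⁻¹ - 1)) := by gcongr
    _ = b + r * p := by field_simp; ring

noncomputable def ruinBound (r σ m x : ℝ) : ℝ :=
  (1 - r ^ (-((m - x) / σ))) / (1 - r ^ (-(m / σ)))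

lemma ruinBound_le_add {r σ m : ℝ} (hr : 1 < r) (hσ : 0 < σ) (hm : 0 < m) (x : ℝ) {b p : ℝ}
    (hb₀ : 0 ≤ b) (hbσ : b ≤ σ) (hp₀ : 0 ≤ p) (hpσ : p ≤ σ) (hbp : 0 < b + r * p) :
    ruinBound r σ m x ≤
      ruinBound r σ m (x + p) * (b / (b + r * p)) +
        ruinBound r σ m (x - b) * (r * p / (b + r * p)) := by
  have hr₀ : 0 < r := by linarith
  have hD : 0 < 1 - r ^ (-(m / σ)) := by
    have : r ^ (-(m / σ)) < 1 := rpow_lt_one_of_one_lt_of_neg hr (by simp; positivity)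
    linarith
  have hwin : r ^ (-((m - (x + p)) / σ)) = r ^ (-((m - x) / σ)) * r ^ (p / σ) := by
    rw [← rpow_add hr₀]; ring_nf
  have hlose : r ^ (-((m - (x - b)) / σ)) = r ^ (-((m - x) / σ)) * r ^ (-(b / σ)) := by
    rw [← rpow_add hr₀]; ring_nf
  have hA : 0 ≤ r ^ (-((m - x) / σ)) := by positivity
  have hweights : b / (b + r * p) + r * p / (b + r * p) = 1 := by
    rw [← add_div, div_self hbp.ne']
  have hmean : b / (b + r * p) * r ^ (p / σ) + r * p / (b + r * p) * r ^ (-(b / σ)) ≤ 1 := by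
    rw [div_mul_eq_mul_div, div_mul_eq_mul_div, ← add_div, div_le_one hbp]
    exact mul_rpow_add_mul_rpow_neg_le hr₀ hσ hb₀ hbσ hp₀ hpσ
  rw [ruinBound, ruinBound, ruinBound, hwin, hlose, div_mul_eq_mul_div, div_mul_eq_mul_div,
    ← add_div, div_le_div_iff_of_pos_right hD]
  linarith [mul_le_mul_of_nonneg_left hmean hA]

end

theorem stmt_2_general (r : ℝ) (hr : 1 < r) (m σ : ℕ) (hm : 1 ≤ m) (hσ : 1 ≤ σ)
    (π : ℕ → ℝ)
    (hπ : ∀ k : ℕ, k ≤ m →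
      π k = (1 - r ^ (-(((m : ℝ) - k) / σ))) / (1 - r ^ (-((m : ℝ) / σ))))
    (k b p : ℕ) (hkm : k < m)
    (hbσ : b ≤ σ) (hp1 : 1 ≤ p) (hpσ : p ≤ σ)
    (hbk : b ≤ k) (hpm : p ≤ m - k) :
    π k ≤ π (k + p) * ((b : ℝ) / ((b : ℝ) + r * p)) +
      π (k - b) * ((r * p) / ((b : ℝ) + r * p)) := by
  have hπ' : ∀ j ≤ m, π j = ruinBound r σ m j := hπ
  rw [hπ' k hkm.le, hπ' (k + p) (by omega), hπ' (k - b) (by omega), Nat.cast_add,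
    Nat.cast_sub hbk]
  have hp : (0 : ℝ) < p := by exact_mod_cast hp1
  exact ruinBound_le_add hr (by exact_mod_cast hσ) (by exact_mod_cast hm) k (Nat.cast_nonneg b)
    (by exact_mod_cast hbσ) hp.le (by exact_mod_cast hpσ) (by positivity)

theorem stmt_2 (r : ℝ) (hr : 1 < r) (m σ : ℕ) (hm : 1 ≤ m) (hσ : 1 ≤ σ)
    (π : ℕ → ℝ)
    (hπ : ∀ k : ℕ, k ≤ m →
      π k = (1 - r ^ (-(((m : ℝ) - k) / σ))) / (1 - r ^ (-((m : ℝ) / σ))))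
    (k b p : ℕ) (hk0 : 0 < k) (hkm : k < m)
    (hb1 : 1 ≤ b) (hbσ : b ≤ σ) (hp1 : 1 ≤ p) (hpσ : p ≤ σ)
    (hbk : b ≤ k) (hpm : p ≤ m - k) :
    π k ≤ π (k + p) * ((b : ℝ) / ((b : ℝ) + r * p)) +
      π (k - b) * ((r * p) / ((b : ℝ) + r * p)) :=
  stmt_2_general r hr m σ hm hσ π hπ k b p hkm hbσ hp1 hpσ hbk hpm
end
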